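/- Let A be a left brace, X ⊆ A a subset additively generating (A,+) with r = r_A|_{X×X} a Yang–Baxter solution on X, and k: X → X. Then k_2 r = r k_1 (equivalently k_1 r = r k_2) holds if and only if k(x) - x ∈ Soc(A) for all x ∈ X and k commutes with every λ_x (x ∈ X) as a map on X. -/

import Mathlib

/-- A left brace structure on an additive abelian group: a group operation
`circ` (with inverse `inv`, whose identity is 0) satisfying the left brace
compatibility a∘(b+c) = a∘b - a + a∘c. -/
structure LeftBrace (A : Type*) [AddCommGroup A] where
  circ : A → A → A
  inv : A → A
  circ_assoc : ∀ a b c, circ (circ a b) c = circ a (circ b c)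
  circ_zero : ∀ a, circ a 0 = a
  zero_circ : ∀ a, circ 0 a = a
  circ_inv : ∀ a, circ a (inv a) = 0
  inv_circ : ∀ a, circ (inv a) a = 0
  compat : ∀ a b c, circ a (b + c) = circ a b - a + circ a c

namespace LeftBrace

variable {A : Type*} [AddCommGroup A] (B : LeftBrace A)

/-- λ_a(b) = -a + a∘b. -/
def lam (a b : A) : A := -a + B.circ a b

/-- a*b = λ_a(b) - b. -/
def star (a b : A) : A := B.lam a b - b

/-- μ_b(a) = λ_a(b)ʹ ∘ a ∘ b. -/
def mu (b a : A) : A := B.circ (B.inv (B.lam a b)) (B.circ a b)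

/-- A left brace is two-sided if (a+b)∘c = a∘c - c + b∘c. -/
def IsTwoSided : Prop := ∀ a b c : A, B.circ (a + b) c = B.circ a c - c + B.circ b c

/-- The Yang–Baxter map r_A(a,b) = (λ_a(b), μ_b(a)) associated to a left brace. -/
def rmap : A × A → A × A := fun p => (B.lam p.1 p.2, B.mu p.2 p.1)

/-- `r × id` acting on triples. -/
def r1map {X : Type*} (r : X × X → X × X) : X × X × X → X × X × X :=
  fun p => ((r (p.1, p.2.1)).1, (r (p.1, p.2.1)).2, p.2.2)

/-- `id × r` acting on triples. -/
def r2map {X : Type*} (r : X × X → X × X) : X × X × X → X × X × X :=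
  fun p => (p.1, r p.2)

/-- `id × k` on pairs. -/
def k2map {X : Type*} (k : X → X) : X × X → X × X := fun p => (p.1, k p.2)

/-- `k × id` on pairs. -/
def k1map {X : Type*} (k : X → X) : X × X → X × X := fun p => (k p.1, p.2)

end LeftBrace

open LeftBrace

/-!
Because `λ : (A, ∘) → Aut(A, +)` is a homomorphism and `a + c = a ∘ λ_a⁻¹(c)`, we get
`λ_{a+c} = λ_a ∘ λ_{λ_a⁻¹(c)}`; as the socle is `λ`-stable, `λ_{k x} = λ_x` holds exactly when
`k x - x ∈ Soc(A)`, and on all of `A` as soon as on the generating set `X`. Given this,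
`μ_y(x) = λ_{λ_x(y)}⁻¹(x)` turns `k ∘ μ_y = μ_y ∘ k` at `x` into `k ∘ λ_u = λ_u ∘ k` at `v`,
where `(u, v) = r(x, y)`; since `r` is involutive and maps `X × X` into itself, the two
commutation conditions are equivalent.
-/

namespace LeftBrace

variable {A : Type*} [AddCommGroup A] (B : LeftBrace A)

def soc : Set A := {s | ∀ b, B.lam s b = b}

lemma circ_eq_add_lam (a b : A) : B.circ a b = a + B.lam a b := by
  simp [lam]

lemma mem_soc_iff_circ {s : A} : s ∈ B.soc ↔ ∀ b, B.circ s b = s + b := by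
  show (∀ b, _) ↔ _
  simp only [circ_eq_add_lam, add_right_inj]

lemma lam_add (a b c : A) : B.lam a (b + c) = B.lam a b + B.lam a c := by
  simp only [lam, B.compat]; abel

def lamHom (a : A) : A →+ A := AddMonoidHom.mk' (B.lam a) (B.lam_add a)

lemma lam_neg (a b : A) : B.lam a (-b) = -B.lam a b := map_neg (B.lamHom a) b

lemma zero_lam (b : A) : B.lam 0 b = b := by
  simp [lam, B.zero_circ]

lemma lam_lam (a b c : A) : B.lam a (B.lam b c) = B.lam (B.circ a b) c := by
  rw [show B.lam b c = -b + B.circ b c from rfl, lam_add, lam_neg]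
  simp only [lam, B.circ_assoc]
  abel

lemma lam_inv_lam (a b : A) : B.lam (B.inv a) (B.lam a b) = b := by
  rw [lam_lam, B.inv_circ, zero_lam]

lemma lam_lam_inv (a b : A) : B.lam a (B.lam (B.inv a) b) = b := by
  rw [lam_lam, B.circ_inv, zero_lam]

lemma lam_injective (a : A) : Function.Injective (B.lam a) :=
  Function.LeftInverse.injective (g := B.lam (B.inv a)) (B.lam_inv_lam a)

lemma lam_eq_of_eqOn {X : Set A} (hgen : AddSubgroup.closure X = ⊤) {p q : A}
    (h : X.EqOn (B.lam p) (B.lam q)) : B.lam p = B.lam q :=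
  congrArg DFunLike.coe (AddMonoidHom.eq_of_eqOn_dense (f := B.lamHom p) (g := B.lamHom q) hgen h)

/-- For `s` in the socle, `λ_a(s) = a ∘ s ∘ a'`. -/
lemma lam_mem_soc (a : A) {s : A} (hs : s ∈ B.soc) : B.lam a s ∈ B.soc := by
  have hconj : B.lam a s = B.circ a (B.circ s (B.inv a)) := by
    rw [(B.mem_soc_iff_circ.1 hs), B.compat, circ_eq_add_lam B a s, B.circ_inv]
    abel
  intro b
  rw [hconj, ← lam_lam, ← lam_lam, hs, lam_lam_inv]

lemma lam_add_left (a c b : A) :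
    B.lam (a + c) b = B.lam a (B.lam (B.lam (B.inv a) c) b) := by
  conv_lhs => rw [← B.lam_lam_inv a c, ← circ_eq_add_lam, ← lam_lam]

lemma lam_add_eq_lam_iff (a c : A) : B.lam (a + c) = B.lam a ↔ c ∈ B.soc := by
  have hc : c = B.lam a (B.lam (B.inv a) c) := (B.lam_lam_inv a c).symm
  constructor
  · intro h
    rw [hc]
    refine B.lam_mem_soc a fun b => B.lam_injective a ?_
    rw [← lam_add_left, h]
  · intro hs
    funext b
    rw [lam_add_left, B.lam_mem_soc (B.inv a) hs]

lemma mu_eq (b a : A) : B.mu b a = B.lam (B.inv (B.lam a b)) a := by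
  rw [mu, circ_eq_add_lam B a b, B.compat, B.inv_circ]
  simp only [lam]
  abel

lemma lam_lam_mu (a b : A) : B.lam (B.lam a b) (B.mu b a) = a := by
  rw [mu_eq, lam_lam_inv]

lemma mu_mu_lam (a b : A) : B.mu (B.mu b a) (B.lam a b) = b := by
  rw [mu_eq, lam_lam_mu, lam_inv_lam]

/-- Since `μ_b(a) = λ_{λ_a(b)'}(a)` and `a = λ_{λ_a(b)}(μ_b(a))`, commuting with `μ_b` at `a`
is commuting with `λ_{λ_a(b)}` at `μ_b(a)`. -/
lemma map_mu_eq_mu_map_iff {k : A → A} {a b : A} (hk : B.lam (k a) b = B.lam a b) :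
    k (B.mu b a) = B.mu b (k a) ↔
      k (B.lam (B.lam a b) (B.mu b a)) = B.lam (B.lam a b) (k (B.mu b a)) := by
  rw [lam_lam_mu, B.mu_eq b (k a), hk, eq_comm (a := k a)]
  exact ⟨fun h => by rw [h, lam_lam_inv], fun h => by rw [← h, lam_inv_lam]⟩

lemma forall_map_mu_iff_forall_map_lam {X : Set A}
    (hclosed : ∀ x ∈ X, ∀ y ∈ X, B.lam x y ∈ X ∧ B.mu y x ∈ X) {k : A → A}
    (hk : ∀ x ∈ X, B.lam (k x) = B.lam x) :
    (∀ x ∈ X, ∀ y ∈ X, k (B.mu y x) = B.mu y (k x)) ↔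
      ∀ x ∈ X, ∀ y ∈ X, k (B.lam x y) = B.lam x (k y) := by
  constructor
  · intro h x hx y hy
    obtain ⟨hu, hv⟩ := hclosed x hx y hy
    have := (B.map_mu_eq_mu_map_iff (congrFun (hk _ hu) _)).1 (h _ hu _ hv)
    simpa only [lam_lam_mu, mu_mu_lam] using this
  · intro h x hx y hy
    obtain ⟨hu, hv⟩ := hclosed x hx y hy
    exact (B.map_mu_eq_mu_map_iff (congrFun (hk x hx) y)).2 (h _ hu _ hv)

end LeftBrace

theorem statement14 {A : Type*} [AddCommGroup A] (B : LeftBrace A)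
    (X : Set A) (hgen : AddSubgroup.closure X = ⊤)
    (hclosed : ∀ x ∈ X, ∀ y ∈ X, B.lam x y ∈ X ∧ B.mu y x ∈ X)
    (k : A → A) :
    (∀ x ∈ X, ∀ y ∈ X, B.lam x y = B.lam (k x) y ∧ k (B.mu y x) = B.mu y (k x)) ↔
    ((∀ x ∈ X, ∀ b : A, B.circ (k x - x) b = (k x - x) + b) ∧
      (∀ x ∈ X, ∀ y ∈ X, k (B.lam x y) = B.lam x (k y))) := by
  have hsoc : ∀ x, B.lam (k x) = B.lam x ↔ ∀ b, B.circ (k x - x) b = (k x - x) + b := fun x => by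
    rw [← B.mem_soc_iff_circ, ← B.lam_add_eq_lam_iff x, add_sub_cancel]
  constructor
  · intro H
    have hlam : ∀ x ∈ X, B.lam (k x) = B.lam x := fun x hx =>
      B.lam_eq_of_eqOn hgen fun y hy => (H x hx y hy).1.symm
    exact ⟨fun x hx => (hsoc x).1 (hlam x hx),
      (B.forall_map_mu_iff_forall_map_lam hclosed hlam).1 fun x hx y hy => (H x hx y hy).2⟩
  · rintro ⟨hcirc, hcomm⟩
    have hlam : ∀ x ∈ X, B.lam (k x) = B.lam x := fun x hx => (hsoc x).2 (hcirc x hx)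
    have hmu := (B.forall_map_mu_iff_forall_map_lam hclosed hlam).2 hcomm
    exact fun x hx y hy => ⟨(congrFun (hlam x hx) y).symm, hmu x hx y hy⟩
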